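/- Define y(t) = x(t, i) where x(t,s) = ( (1/2)t(s³ + 3s) + (1/2)s², t², t + s ) and i² = −1. Then y(t) = (i·t − 1/2, t², t + i), and the image of y is a (complex) parabola, not a straight line: y'(t) = (i, 2t, 1) and y''(t) = (0, 2, 0) are linearly independent over ℂ for every t. -/
import Mathlib

/-- The surface `x(t,s) = ((1/2)t(s³+3s) + (1/2)s², t², t+s)`. -/
noncomputable def xsurf16 (t s : ℂ) : Fin 3 → ℂ :=
  ![(1 / 2 : ℂ) * t * (s ^ 3 + 3 * s) + (1 / 2 : ℂ) * s ^ 2, t ^ 2, t + s]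

/-- The curve `y(t) = x(t, i)` on the surface above. -/
noncomputable def ycurve16 : ℂ → Fin 3 → ℂ := fun t => xsurf16 t Complex.I

lemma ycurve16_eq : ∀ t : ℂ, ycurve16 t = ![Complex.I * t - 1 / 2, t ^ 2, t + Complex.I] := by
  intro t
  funext i
  fin_cases i <;>
    simp [ycurve16, xsurf16, pow_succ, Complex.I_sq] <;> ring

lemma ycurve16_deriv : deriv ycurve16 = fun t => ![Complex.I, 2 * t, 1] := by
  funext t
  have h : HasDerivAt ycurve16 ![Complex.I, 2 * t, 1] t := by
    have : HasDerivAt (fun u : ℂ => ![Complex.I * u - 1 / 2, u ^ 2, u + Complex.I])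
        ![Complex.I, 2 * t, 1] t := by
      rw [hasDerivAt_pi]
      intro i
      fin_cases i <;> simp
      · simpa using ((hasDerivAt_id t).const_mul Complex.I).sub_const (1 / 2)
      · simpa using (hasDerivAt_pow 2 t)
      · simpa using (hasDerivAt_id t).add_const Complex.I
    exact this.congr_of_eventuallyEq (Filter.Eventually.of_forall fun u => ycurve16_eq u)
  exact h.deriv

lemma ycurve16_deriv2 : ∀ t : ℂ, deriv (deriv ycurve16) t = ![0, 2, 0] := by
  intro t
  rw [ycurve16_deriv]
  have h : HasDerivAt (fun t : ℂ => ![Complex.I, 2 * t, 1] : ℂ → Fin 3 → ℂ)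
      ![0, 2, 0] t := by
    rw [hasDerivAt_pi]
    intro i
    fin_cases i <;> simp
    · exact hasDerivAt_const t Complex.I
    · simpa using (hasDerivAt_id t).const_mul (2 : ℂ)
    · exact hasDerivAt_const t (1 : ℂ)
  exact h.deriv

/-- The paper's counterexample: `y(t) = x(t, i) = (it - 1/2, t², t + i)` is a complex
parabola, not a straight line: `y' = (i, 2t, 1)` and `y'' = (0, 2, 0)` are linearly
independent over ℂ for every `t`. -/
theorem stmt_16 :
    (∀ t : ℂ, ycurve16 t = ![Complex.I * t - 1 / 2, t ^ 2, t + Complex.I]) ∧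
    (∀ t : ℂ, deriv ycurve16 t = ![Complex.I, 2 * t, 1]) ∧
    (∀ t : ℂ, deriv (deriv ycurve16) t = ![0, 2, 0]) ∧
    (∀ t : ℂ, LinearIndependent ℂ ![deriv ycurve16 t, deriv (deriv ycurve16) t]) := by
  refine ⟨ycurve16_eq, fun t => by rw [ycurve16_deriv], ycurve16_deriv2, ?_⟩
  intro t
  rw [ycurve16_deriv2 t, ycurve16_deriv]
  rw [LinearIndependent.pair_iff]
  intro a b hab
  have h1 := congrFun hab 1
  have h2 := congrFun hab 2
  simp at h1 h2
  refine ⟨h2, ?_⟩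
  simpa [h2] using h1
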